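/- The 0-odometer O_0 is minimal: every orbit is dense. Equivalently, given any infinite word ω = (w_1, w_2, w_3, …) ∈ Σ_{≥0} and any finite word (v_1, v_2, …, v_k) with v_j ∈ ℕ_0, there exists n > 0 such that O_0^n(ω) begins with (v_1, v_2, …, v_k). -/

import Mathlib

/-!
Code a word `w` by the binary sequence `1^{w 0} 0 1^{w 1} 0 1^{w 2} 0 ⋯`, lowest digit first.
Applying `O₀` turns the leading block of ones into zeros and the following zero into a one, i.e.
it adds one to the code read as a 2-adic integer. Hence the lowest `L` digits of the codes along
an orbit run through all residues modulo `2 ^ L`, and since the first `k` letters of a word are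
determined by the digits of its code below the position of its `k`-th zero, every cylinder is
visited.
-/

/-- The `0`-odometer on the Baire-type space `ℕ₀^ℕ`:
`O₀(w₁,w₂,w₃,…) = (0,…,0 (w₁ times), w₂+1, w₃, …)`. -/
def baireOdometer (w : ℕ → ℕ) : ℕ → ℕ := fun i =>
  if i < w 0 then 0
  else if i = w 0 then w 1 + 1
  else w (i - w 0 + 1)

open Finset

section StrictMono

open Classical in
theorem StrictMono.count_mem_range_apply {f : ℕ → ℕ} (hf : StrictMono f) (m : ℕ) :
    Nat.count (· ∈ Set.range f) (f m) = m := by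
  have : {i ∈ range (f m) | i ∈ Set.range f} = (range m).image f := by
    ext i
    simp only [mem_filter, mem_range, mem_image, Set.mem_range]
    constructor
    · rintro ⟨hi, j, rfl⟩
      exact ⟨j, hf.lt_iff_lt.1 hi, rfl⟩
    · rintro ⟨j, hj, rfl⟩
      exact ⟨hf hj, j, rfl⟩
  rw [Nat.count_eq_card_filter_range, this, card_image_of_injective _ hf.injective, card_range]

/-- `f m` is the element of `range f` preceded by exactly `m` others, so it is read off from
`range f ∩ [0, f m]`. -/
theorem StrictMono.apply_eq_of_mem_range_iff {f g : ℕ → ℕ} (hf : StrictMono f)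
    (hg : StrictMono g) {m : ℕ} (h : ∀ i ≤ g m, i ∈ Set.range f ↔ i ∈ Set.range g) :
    f m = g m := by
  classical
  obtain ⟨t, ht⟩ := (h _ le_rfl).2 ⟨m, rfl⟩
  have hcount : Nat.count (· ∈ Set.range f) (g m) = Nat.count (· ∈ Set.range g) (g m) := by
    simp only [Nat.count_eq_card_filter_range]
    exact congrArg card (filter_congr fun i hi => h i (mem_range.1 hi).le)
  rw [← ht, hf.count_mem_range_apply, ht, hg.count_mem_range_apply] at hcount
  exact hcount ▸ ht

end StrictMono

section BinaryValue

open scoped Classical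

noncomputable def binaryValue (s : Set ℕ) (L : ℕ) : ℕ := ∑ i ∈ range L with i ∈ s, 2 ^ i

theorem binaryValue_lt (s : Set ℕ) (L : ℕ) : binaryValue s L < 2 ^ L :=
  Nat.geomSum_lt le_rfl fun _ hi => mem_range.1 (mem_filter.1 hi).1

theorem binaryValue_succ (s : Set ℕ) (L : ℕ) :
    binaryValue s (L + 1) = binaryValue s L + if L ∈ s then 2 ^ L else 0 := by
  unfold binaryValue
  rw [range_add_one, filter_insert]
  split_ifs
  · rw [sum_insert (by simp), add_comm]
  · simp

theorem binaryValue_of_forall_mem {s : Set ℕ} {L : ℕ} (h : ∀ i < L, i ∈ s) :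
    binaryValue s L = 2 ^ L - 1 := by
  rw [binaryValue, filter_true_of_mem fun i hi => h i (mem_range.1 hi), Nat.geomSum_eq le_rfl]
  simp

theorem binaryValue_of_forall_notMem {s : Set ℕ} {L : ℕ} (h : ∀ i < L, i ∉ s) :
    binaryValue s L = 0 := by
  rw [binaryValue, filter_false_of_mem fun i hi => h i (mem_range.1 hi), sum_empty]

theorem mem_iff_of_binaryValue_eq {s t : Set ℕ} {L : ℕ} (h : binaryValue s L = binaryValue t L)
    {i : ℕ} (hi : i < L) : i ∈ s ↔ i ∈ t := by
  have := Finset.geomSum_injective le_rfl h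
  simpa [hi] using congrArg (i ∈ ·) this

/-- Adding one to a binary number turns its trailing ones into zeros and the first zero into a
one; modulo `2 ^ L` this holds for its `L` lowest digits. -/
theorem binaryValue_insert_diff_Iio {s : Set ℕ} {a : ℕ} (hs : Set.Iio a ⊆ s) (ha : a ∉ s)
    (L : ℕ) : binaryValue (insert a (s \ Set.Iio a)) L = (binaryValue s L + 1) % 2 ^ L := by
  rcases le_or_gt L a with hLa | haL
  · rw [binaryValue_of_forall_notMem, binaryValue_of_forall_mem fun i hi => hs (hi.trans_le hLa),
      Nat.sub_add_cancel Nat.one_le_two_pow, Nat.mod_self]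
    intro i hi
    simp only [Set.mem_insert_iff, Set.mem_sdiff, Set.mem_Iio]
    omega
  · suffices h : binaryValue (insert a (s \ Set.Iio a)) L = binaryValue s L + 1 by
      rw [← h, Nat.mod_eq_of_lt (binaryValue_lt _ _)]
    induction L, haL using Nat.le_induction with
    | base =>
      rw [binaryValue_succ, binaryValue_succ, if_pos (Set.mem_insert _ _), if_neg ha,
        binaryValue_of_forall_notMem, binaryValue_of_forall_mem hs,
        Nat.sub_add_cancel Nat.one_le_two_pow]
      · simp
      · intro i hi
        simp only [Set.mem_insert_iff, Set.mem_sdiff, Set.mem_Iio]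
        omega
    | succ L haL ih =>
      have hL : L ∈ insert a (s \ Set.Iio a) ↔ L ∈ s := by
        have : a < L := haL
        simp [this.ne', this.le]
      rw [binaryValue_succ, binaryValue_succ, ih]
      simp only [hL]
      ring

end BinaryValue

section BaireOdometerApply

theorem baireOdometer_apply_of_lt {w : ℕ → ℕ} {i : ℕ} (hi : i < w 0) : baireOdometer w i = 0 :=
  if_pos hi

theorem baireOdometer_apply_self (w : ℕ → ℕ) : baireOdometer w (w 0) = w 1 + 1 := by
  simp [baireOdometer]

theorem baireOdometer_apply_of_gt {w : ℕ → ℕ} {i : ℕ} (hi : w 0 < i) :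
    baireOdometer w i = w (i - w 0 + 1) := by
  rw [baireOdometer, if_neg hi.not_gt, if_neg hi.ne']

end BaireOdometerApply

namespace BaireOdometer

/-- Position of the `m`-th zero in the binary coding `1^{w 0} 0 1^{w 1} 0 1^{w 2} 0 ⋯` of `w`. -/
def zeroPos (w : ℕ → ℕ) (m : ℕ) : ℕ := m + ∑ j ∈ range (m + 1), w j

def codeOnes (w : ℕ → ℕ) : Set ℕ := (Set.range (zeroPos w))ᶜ

theorem zeroPos_zero (w : ℕ → ℕ) : zeroPos w 0 = w 0 := by simp [zeroPos]

theorem zeroPos_succ (w : ℕ → ℕ) (m : ℕ) : zeroPos w (m + 1) = zeroPos w m + w (m + 1) + 1 := by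
  simp only [zeroPos, sum_range_succ _ (m + 1)]
  ring

theorem zeroPos_strictMono (w : ℕ → ℕ) : StrictMono (zeroPos w) :=
  strictMono_nat_of_lt_succ fun m => by rw [zeroPos_succ]; omega

theorem eq_of_zeroPos_eq {w u : ℕ → ℕ} {k : ℕ} (h : ∀ m < k, zeroPos w m = zeroPos u m) :
    ∀ m < k, w m = u m
  | 0, hk => by simpa only [zeroPos_zero] using h 0 hk
  | m + 1, hk => by
    have h₁ := h (m + 1) hk
    rw [zeroPos_succ, zeroPos_succ, h m (by omega)] at h₁
    omega

theorem zeroPos_baireOdometer_apply_of_lt (w : ℕ → ℕ) {m : ℕ} (hm : m < w 0) :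
    zeroPos (baireOdometer w) m = m := by
  rw [zeroPos, sum_eq_zero fun j hj => baireOdometer_apply_of_lt ((mem_range.1 hj).trans_le hm), add_zero]

theorem zeroPos_baireOdometer_add (w : ℕ → ℕ) (m : ℕ) :
    zeroPos (baireOdometer w) (w 0 + m) = zeroPos w (m + 1) := by
  induction m with
  | zero =>
    rw [zeroPos, add_zero, sum_range_succ,
      sum_eq_zero fun j hj => baireOdometer_apply_of_lt (mem_range.1 hj), zeroPos_succ, zeroPos_zero,
      baireOdometer_apply_self]
    ring
  | succ m ih =>
    rw [← add_assoc, zeroPos_succ, ih, zeroPos_succ _ (m + 1), baireOdometer_apply_of_gt (by omega),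
      add_assoc (w 0), Nat.add_sub_cancel_left]

theorem mem_range_zeroPos_baireOdometer {w : ℕ → ℕ} {i : ℕ} :
    i ∈ Set.range (zeroPos (baireOdometer w)) ↔
      i < w 0 ∨ i ∈ Set.range (zeroPos w) ∧ i ≠ w 0 := by
  have hpos : ∀ t, w 0 < zeroPos w (t + 1) := fun t =>
    zeroPos_zero w ▸ zeroPos_strictMono w t.succ_pos
  constructor
  · rintro ⟨m, rfl⟩
    rcases lt_or_ge m (w 0) with hm | hm
    · exact .inl (by rwa [zeroPos_baireOdometer_apply_of_lt w hm])
    · obtain ⟨t, rfl⟩ := Nat.exists_eq_add_of_le hm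
      rw [zeroPos_baireOdometer_add]
      exact .inr ⟨⟨_, rfl⟩, (hpos t).ne'⟩
  · rintro (hi | ⟨⟨_ | t, rfl⟩, hne⟩)
    · exact ⟨i, zeroPos_baireOdometer_apply_of_lt w hi⟩
    · exact absurd (zeroPos_zero w) hne
    · exact ⟨w 0 + t, zeroPos_baireOdometer_add w t⟩

theorem codeOnes_baireOdometer (w : ℕ → ℕ) :
    codeOnes (baireOdometer w) = insert (w 0) (codeOnes w \ Set.Iio (w 0)) := by
  ext i
  simp only [codeOnes, Set.mem_compl_iff, mem_range_zeroPos_baireOdometer, Set.mem_insert_iff,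
    Set.mem_sdiff, Set.mem_Iio]
  by_cases hi : i = w 0
  · simp [hi]
  · tauto

theorem Iio_subset_codeOnes (w : ℕ → ℕ) : Set.Iio (w 0) ⊆ codeOnes w := by
  rintro i hi ⟨m, rfl⟩
  exact (Set.mem_Iio.1 hi).not_ge (zeroPos_zero w ▸ (zeroPos_strictMono w).monotone m.zero_le)

theorem apply_zero_notMem_codeOnes (w : ℕ → ℕ) : w 0 ∉ codeOnes w :=
  fun h => h ⟨0, zeroPos_zero w⟩

theorem binaryValue_codeOnes_iterate (w : ℕ → ℕ) (L n : ℕ) :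
    binaryValue (codeOnes (baireOdometer^[n] w)) L = (binaryValue (codeOnes w) L + n) % 2 ^ L := by
  induction n with
  | zero => exact (Nat.mod_eq_of_lt (binaryValue_lt _ _)).symm
  | succ n ih =>
    rw [Function.iterate_succ_apply', codeOnes_baireOdometer,
      binaryValue_insert_diff_Iio (Iio_subset_codeOnes _) (apply_zero_notMem_codeOnes _), ih,
      Nat.mod_add_mod, add_assoc]

theorem exists_iterate_mem_cylinder (ω x : ℕ → ℕ) (k : ℕ) :
    ∃ n, baireOdometer^[n] ω ∈ PiNat.cylinder x k := by
  set L := zeroPos x k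
  set n := 2 ^ L - binaryValue (codeOnes ω) L + binaryValue (codeOnes x) L
  have hval : binaryValue (codeOnes (baireOdometer^[n] ω)) L = binaryValue (codeOnes x) L := by
    have := binaryValue_lt (codeOnes ω) L
    rw [binaryValue_codeOnes_iterate, ← Nat.add_assoc, Nat.add_sub_cancel' this.le,
      Nat.add_mod_left, Nat.mod_eq_of_lt (binaryValue_lt _ _)]
  refine ⟨n, PiNat.mem_cylinder_iff.2 (eq_of_zeroPos_eq fun m hm => ?_)⟩
  refine (zeroPos_strictMono _).apply_eq_of_mem_range_iff (zeroPos_strictMono x) fun i hi => ?_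
  exact not_iff_not.1 (mem_iff_of_binaryValue_eq hval (hi.trans_lt (zeroPos_strictMono x hm)))

end BaireOdometer

theorem baireOdometer_minimal :
    (∀ ω : ℕ → ℕ, Dense (Set.range fun n : ℕ => (baireOdometer)^[n] ω)) ∧
      (∀ (ω : ℕ → ℕ) (k : ℕ) (v : Fin k → ℕ),
        ∃ n > 0, ∀ j : Fin k, (baireOdometer)^[n] ω (j : ℕ) = v j) := by
  refine ⟨fun ω => (PiNat.isTopologicalBasis_cylinders _).dense_iff.2 ?_, fun ω k v => ?_⟩
  · rintro _ ⟨x, k, rfl⟩ -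
    obtain ⟨n, hn⟩ := BaireOdometer.exists_iterate_mem_cylinder ω x k
    exact ⟨_, hn, n, rfl⟩
  · obtain ⟨n, hn⟩ := BaireOdometer.exists_iterate_mem_cylinder (baireOdometer ω)
      (fun i => if h : i < k then v ⟨i, h⟩ else 0) k
    refine ⟨n + 1, n.succ_pos, fun j => ?_⟩
    simpa [Function.iterate_succ_apply] using PiNat.mem_cylinder_iff.1 hn j j.2
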